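/- Feasibility of the Bernstein discretization (Theorem 1): let f : ℝ^{n_x} × ℝ^{n_u} → ℝ^{n_x} be Lipschitz with constant L_f and h : ℝ^{n_x} × ℝ^{n_u} → ℝ^{n_h} be Lipschitz with constant L_h. Let x : [0,1] → ℝ^{n_x} be continuously differentiable and u : [0,1] → ℝ^{n_u} be continuous with x′(t) = f(x(t), u(t)) and h(x(t), u(t)) ≤ 0 componentwise for all t ∈ [0,1]. Then there exists C_P > 0, independent of N, such that for every N ∈ ℕ, N ≥ 1, the Bernstein approximations x_N = B_N x and u_N = B_N u satisfy, at every node t_j = j/N (j = 0,…,N): ‖x_N′(t_j) − f(x_N(t_j), u_N(t_j))‖ ≤ δ_P^N and every component of h(x_N(t_j), u_N(t_j)) is ≤ δ_P^N, where δ_P^N = C_P · max{W_{x′}(N^{−1/2}), W_x(N^{−1/2}), W_u(N^{−1/2})}; moreover x_N(0) = x(0) and x_N(1) = x(1). -/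

import Mathlib

open scoped BigOperators

/-- The Bernstein basis polynomial `b_{j,N}(t) = C(N,j) t^j (1-t)^(N-j)`. -/
noncomputable def bern (N j : ℕ) (t : ℝ) : ℝ :=
  (N.choose j : ℝ) * t ^ j * (1 - t) ^ (N - j)

/-- The modulus of continuity on `[0,1]` of a function `g`. -/
noncomputable def modCont {E : Type*} [NormedAddCommGroup E] (g : ℝ → E) (δ : ℝ) : ℝ :=
  sSup {d : ℝ | ∃ s t : ℝ, s ∈ Set.Icc (0:ℝ) 1 ∧ t ∈ Set.Icc (0:ℝ) 1 ∧
    |s - t| ≤ δ ∧ d = ‖g s - g t‖}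

/-- The `N`-th Bernstein approximation of `g : [0,1] → E`. -/
noncomputable def bapprox {E : Type*} [AddCommMonoid E] [Module ℝ E]
    (N : ℕ) (g : ℝ → E) (t : ℝ) : E :=
  ∑ j : Fin (N + 1), bern N (j : ℕ) t • g (((j : ℕ) : ℝ) / (N : ℝ))

/-!
Chaining along `[t, s]` gives `‖g s - g t‖ ≤ (1 + (s - t)² / δ²) · W_g(δ)`, and the Bernstein
weights `b_{j,N}(t)` have second moment `t (1 - t) / N` about `t`; averaging therefore gives
`‖B_N g - g‖ ≤ (1 + 1 / (N δ²)) · W_g(δ)`. The derivative of `B_N x` is the Bernstein average of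
degree `N - 1` of the difference quotients of `x` on the grid of mesh `1 / N`, and by the mean
value inequality each quotient over `[a, b]` lies within `(1 + ((a - t)² + (b - t)²) / δ²) · W_{x'}(δ)`
of `x' t`, so the same bound holds for `(B_N x)' - x'`. For `δ = N^{-1/2}` both errors are at most
`2 W`, and the Lipschitz continuity of `f` and `h` carries them over to the dynamics and the
constraints, which `(x, u)` satisfies exactly.
-/

open Set Finset

section ModulusOfContinuity

variable {E : Type*} [NormedAddCommGroup E] {g : ℝ → E} {δ : ℝ}

lemma bddAbove_modCont_set (hg : ContinuousOn g (Icc 0 1)) :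
    BddAbove {d : ℝ | ∃ s t : ℝ, s ∈ Icc (0:ℝ) 1 ∧ t ∈ Icc (0:ℝ) 1 ∧
      |s - t| ≤ δ ∧ d = ‖g s - g t‖} := by
  obtain ⟨M, hM⟩ := isCompact_Icc.exists_bound_of_continuousOn hg
  refine ⟨M + M, ?_⟩
  rintro d ⟨s, t, hs, ht, -, rfl⟩
  exact (norm_sub_le _ _).trans (add_le_add (hM s hs) (hM t ht))

lemma norm_sub_le_modCont (hg : ContinuousOn g (Icc 0 1)) {s t : ℝ} (hs : s ∈ Icc (0:ℝ) 1)
    (ht : t ∈ Icc (0:ℝ) 1) (hst : |s - t| ≤ δ) : ‖g s - g t‖ ≤ modCont g δ :=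
  le_csSup (bddAbove_modCont_set hg) ⟨s, t, hs, ht, hst, rfl⟩

lemma modCont_nonneg (hg : ContinuousOn g (Icc 0 1)) (hδ : 0 ≤ δ) : 0 ≤ modCont g δ :=
  (norm_nonneg _).trans <| norm_sub_le_modCont hg (left_mem_Icc.2 zero_le_one)
    (left_mem_Icc.2 zero_le_one) (by simpa using hδ)

/-- Split `[t, s]` into `k` pieces of length at most `δ` and telescope. -/
lemma norm_sub_le_nat_mul_modCont (hg : ContinuousOn g (Icc 0 1)) {s t : ℝ}
    (hs : s ∈ Icc (0:ℝ) 1) (ht : t ∈ Icc (0:ℝ) 1) {k : ℕ} (hk : |s - t| ≤ k * δ) :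
    ‖g s - g t‖ ≤ k * modCont g δ := by
  rcases k.eq_zero_or_pos with rfl | hk0
  · obtain rfl : s = t := by simpa [sub_eq_zero] using hk
    simp
  have hkR : (0:ℝ) < k := by exact_mod_cast hk0
  set r : ℕ → ℝ := fun i => t + ((i:ℝ) / k) • (s - t) with hr
  have hr_mem : ∀ i ≤ k, r i ∈ Icc (0:ℝ) 1 := fun i hi =>
    (convex_Icc 0 1).add_smul_sub_mem ht hs
      ⟨by positivity, (div_le_one hkR).2 (by exact_mod_cast hi)⟩
  have hstep : ∀ i < k, ‖g (r (i + 1)) - g (r i)‖ ≤ modCont g δ := fun i hi => by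
    refine norm_sub_le_modCont hg (hr_mem _ hi) (hr_mem _ hi.le) ?_
    have : r (i + 1) - r i = (s - t) / k := by simp only [hr, smul_eq_mul]; push_cast; ring
    rwa [this, abs_div, abs_of_pos hkR, div_le_iff₀ hkR, mul_comm]
  calc ‖g s - g t‖ = ‖∑ i ∈ range k, (g (r (i + 1)) - g (r i))‖ := by
        rw [sum_range_sub (fun i => g (r i))]; simp [hr, hkR.ne']
    _ ≤ ∑ i ∈ range k, ‖g (r (i + 1)) - g (r i)‖ := norm_sum_le _ _
    _ ≤ ∑ _i ∈ range k, modCont g δ := sum_le_sum fun i hi => hstep i (mem_range.1 hi)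
    _ = k * modCont g δ := by simp

lemma norm_sub_le_one_add_sq_div_sq_mul_modCont (hg : ContinuousOn g (Icc 0 1)) (hδ : 0 < δ)
    {s t : ℝ} (hs : s ∈ Icc (0:ℝ) 1) (ht : t ∈ Icc (0:ℝ) 1) :
    ‖g s - g t‖ ≤ (1 + (s - t) ^ 2 / δ ^ 2) * modCont g δ := by
  have hW := modCont_nonneg hg hδ.le
  by_cases hst : |s - t| ≤ δ
  · calc ‖g s - g t‖ ≤ modCont g δ := norm_sub_le_modCont hg hs ht hst
      _ ≤ _ := le_mul_of_one_le_left hW (le_add_of_nonneg_right (by positivity))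
  · set q := |s - t| / δ
    have hq : 1 < q := (one_lt_div hδ).2 (not_le.1 hst)
    calc ‖g s - g t‖ ≤ ⌈q⌉₊ * modCont g δ :=
          norm_sub_le_nat_mul_modCont hg hs ht ((div_le_iff₀ hδ).1 (Nat.le_ceil q))
      _ ≤ (1 + q ^ 2) * modCont g δ := by
          gcongr
          nlinarith [Nat.ceil_lt_add_one (zero_le_one.trans hq.le)]
      _ = _ := by rw [div_pow, sq_abs]

end ModulusOfContinuity

section BernsteinMoments

lemma bern_eq_eval (N j : ℕ) (t : ℝ) : bern N j t = (bernsteinPolynomial ℝ N j).eval t := by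
  simp [bern, bernsteinPolynomial, mul_assoc]

lemma bern_nonneg (N j : ℕ) {t : ℝ} (ht : t ∈ Icc (0:ℝ) 1) : 0 ≤ bern N j t := by
  have : 0 ≤ 1 - t := sub_nonneg.2 ht.2
  have := ht.1
  unfold bern; positivity

lemma sum_bern (n : ℕ) (t : ℝ) : ∑ j ∈ range (n + 1), bern n j t = 1 := by
  simpa [Polynomial.eval_finsetSum, bern_eq_eval] using
    congrArg (Polynomial.eval t) (bernsteinPolynomial.sum ℝ n)

lemma sum_bern_mul_nat (n : ℕ) (t : ℝ) : ∑ j ∈ range (n + 1), bern n j t * j = n * t := by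
  simpa [Polynomial.eval_finsetSum, bern_eq_eval, mul_comm] using
    congrArg (Polynomial.eval t) (bernsteinPolynomial.sum_smul ℝ n)

lemma sum_bern_mul_nat_sub_sq (n : ℕ) (t : ℝ) :
    ∑ j ∈ range (n + 1), bern n j t * ((j : ℝ) - n * t) ^ 2 = n * t * (1 - t) := by
  have := congrArg (Polynomial.eval t) (bernsteinPolynomial.variance ℝ n)
  simp only [Polynomial.eval_finsetSum, Polynomial.eval_mul, Polynomial.eval_pow,
    Polynomial.eval_sub, Polynomial.eval_X, Polynomial.eval_natCast,
    Polynomial.eval_one, nsmul_eq_mul, ← bern_eq_eval] at this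
  rw [← this]
  exact sum_congr rfl fun j _ => by ring

/-- Bias–variance decomposition: the weights `bern n · t` have mean `n t` and variance
`n t (1 - t)`. -/
lemma sum_bern_mul_div_sub_sq (n : ℕ) {N : ℝ} (hN : N ≠ 0) (t c : ℝ) :
    ∑ j ∈ range (n + 1), bern n j t * ((j : ℝ) / N - c) ^ 2
      = (n * t * (1 - t) + (n * t - N * c) ^ 2) / N ^ 2 := by
  have expand : ∀ j : ℕ, bern n j t * ((j : ℝ) / N - c) ^ 2
      = (bern n j t * ((j : ℝ) - n * t) ^ 2 + 2 * (n * t - N * c) * (bern n j t * j)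
        + ((n * t - N * c) ^ 2 - 2 * (n * t - N * c) * (n * t)) * bern n j t) / N ^ 2 := by
    intro j; field_simp; ring
  simp only [expand, ← sum_div, sum_add_distrib, ← mul_sum, sum_bern_mul_nat_sub_sq,
    sum_bern_mul_nat, sum_bern]
  ring

lemma sum_bern_mul_div_sub_sq_le {N : ℕ} (hN : 1 ≤ N) {t : ℝ} (ht : t ∈ Icc (0:ℝ) 1) :
    ∑ j ∈ range (N + 1), bern N j t * ((j : ℝ) / N - t) ^ 2 ≤ 1 / N := by
  have hN0 : (0:ℝ) < N := by exact_mod_cast hN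
  have hvar : t * (1 - t) ≤ 1 := by nlinarith [ht.1, ht.2]
  rw [sum_bern_mul_div_sub_sq N hN0.ne', sub_self, div_le_div_iff₀ (by positivity) hN0]
  nlinarith [mul_le_mul_of_nonneg_left hvar (sq_nonneg (N : ℝ))]

lemma sum_bern_mul_sq_add_sq_le (n : ℕ) {t : ℝ} (ht : t ∈ Icc (0:ℝ) 1) :
    ∑ j ∈ range (n + 1), bern n j t *
        (((j : ℝ) / (n + 1) - t) ^ 2 + (((j : ℝ) + 1) / (n + 1) - t) ^ 2) ≤ 1 / ((n : ℝ) + 1) := by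
  have hN : (n : ℝ) + 1 ≠ 0 := by positivity
  have shift : ∀ j : ℕ, ((j : ℝ) + 1) / (n + 1) - t = (j : ℝ) / (n + 1) - (t - 1 / (n + 1)) :=
    fun j => by field_simp; ring
  simp only [mul_add, sum_add_distrib, shift, sum_bern_mul_div_sub_sq n hN]
  rw [← add_div, div_le_div_iff₀ (by positivity) (by positivity)]
  field_simp
  nlinarith [ht.1, ht.2, mul_nonneg ht.1 (sub_nonneg.2 ht.2), sq_nonneg (2 * t - 1)]

end BernsteinMoments

section Approximation

variable {E : Type*} [NormedAddCommGroup E] [NormedSpace ℝ E]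

lemma norm_sum_smul_sub_le {ι : Type*} {s : Finset ι} {w e : ι → ℝ} {v : ι → E} {v₀ : E}
    {W ε : ℝ} (hw : ∀ i ∈ s, 0 ≤ w i) (hw_sum : ∑ i ∈ s, w i = 1)
    (hv : ∀ i ∈ s, ‖v i - v₀‖ ≤ (1 + e i) * W) (hW : 0 ≤ W) (he : ∑ i ∈ s, w i * e i ≤ ε) :
    ‖∑ i ∈ s, w i • v i - v₀‖ ≤ (1 + ε) * W := by
  have hv₀ : v₀ = ∑ i ∈ s, w i • v₀ := by rw [← sum_smul, hw_sum, one_smul]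
  calc ‖∑ i ∈ s, w i • v i - v₀‖ = ‖∑ i ∈ s, w i • (v i - v₀)‖ := by
        conv_lhs => rw [hv₀]
        simp only [smul_sub, sum_sub_distrib]
    _ ≤ ∑ i ∈ s, w i * ((1 + e i) * W) := by
        refine (norm_sum_le _ _).trans (sum_le_sum fun i hi => ?_)
        rw [norm_smul, Real.norm_of_nonneg (hw i hi)]
        exact mul_le_mul_of_nonneg_left (hv i hi) (hw i hi)
    _ = (1 + ∑ i ∈ s, w i * e i) * W := by
        simp only [← mul_assoc, ← sum_mul, mul_add, mul_one, sum_add_distrib, hw_sum]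
    _ ≤ (1 + ε) * W := by gcongr

lemma bapprox_eq_sum_range (N : ℕ) (g : ℝ → E) (t : ℝ) :
    bapprox N g t = ∑ j ∈ range (N + 1), bern N j t • g ((j : ℝ) / N) :=
  Fin.sum_univ_eq_sum_range (fun j => bern N j t • g ((j : ℝ) / N)) (N + 1)

lemma bapprox_zero (N : ℕ) (g : ℝ → E) : bapprox N g 0 = g 0 := by
  simp [bapprox_eq_sum_range, bern_eq_eval, bernsteinPolynomial.eval_at_0]

lemma bapprox_one {N : ℕ} (hN : 1 ≤ N) (g : ℝ → E) : bapprox N g 1 = g 1 := by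
  have hN0 : (N : ℝ) ≠ 0 := by positivity
  simp [bapprox_eq_sum_range, bern_eq_eval, bernsteinPolynomial.eval_at_1, hN0]

lemma norm_bapprox_sub_le {g : ℝ → E} (hg : ContinuousOn g (Icc 0 1)) {N : ℕ} (hN : 1 ≤ N)
    {δ : ℝ} (hδ : 0 < δ) {t : ℝ} (ht : t ∈ Icc (0:ℝ) 1) :
    ‖bapprox N g t - g t‖ ≤ (1 + 1 / (N * δ ^ 2)) * modCont g δ := by
  have hN0 : (0:ℝ) < N := by exact_mod_cast hN
  have hnode : ∀ j ∈ range (N + 1), (j : ℝ) / N ∈ Icc (0:ℝ) 1 := fun j hj =>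
    ⟨by positivity, (div_le_one hN0).2 (by exact_mod_cast mem_range_succ_iff.1 hj)⟩
  rw [bapprox_eq_sum_range]
  refine norm_sum_smul_sub_le (fun j _ => bern_nonneg N j ht) (sum_bern N t)
    (fun j hj => norm_sub_le_one_add_sq_div_sq_mul_modCont hg hδ (hnode j hj) ht)
    (modCont_nonneg hg hδ.le) ?_
  simp only [mul_div_assoc', ← sum_div, ← div_div]
  gcongr
  exact sum_bern_mul_div_sub_sq_le hN ht

lemma dist_bapprox_prod_le {F : Type*} [NormedAddCommGroup F] [NormedSpace ℝ F] {x : ℝ → E}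
    {u : ℝ → F} (hx : ContinuousOn x (Icc 0 1)) (hu : ContinuousOn u (Icc 0 1)) {N : ℕ}
    (hN : 1 ≤ N) {δ : ℝ} (hδ : 0 < δ) {t : ℝ} (ht : t ∈ Icc (0:ℝ) 1) :
    dist (x t, u t) (bapprox N x t, bapprox N u t)
      ≤ (1 + 1 / (N * δ ^ 2)) * max (modCont x δ) (modCont u δ) := by
  rw [dist_comm, Prod.dist_eq, dist_eq_norm, dist_eq_norm,
    mul_max_of_nonneg _ _ (by positivity)]
  exact max_le_max (norm_bapprox_sub_le hx hN hδ ht) (norm_bapprox_sub_le hu hN hδ ht)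

end Approximation

section Derivative

variable {E : Type*} [NormedAddCommGroup E] [NormedSpace ℝ E]

open Polynomial in
lemma hasDerivAt_bapprox_succ (n : ℕ) (g : ℝ → E) (t : ℝ) :
    HasDerivAt (bapprox (n + 1) g)
      (∑ j ∈ range (n + 1),
        bern n j t • slope g ((j : ℝ) / (n + 1)) (((j : ℝ) + 1) / (n + 1))) t := by
  set c : ℕ → E := fun j => g ((j : ℝ) / (n + 1))
  set B : ℕ → ℝ := fun j => (bernsteinPolynomial ℝ n j).eval t
  have hfun : bapprox (n + 1) g
      = fun s => ∑ j ∈ range (n + 2), (bernsteinPolynomial ℝ (n + 1) j).eval s • c j := by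
    funext s
    simp only [bapprox_eq_sum_range, bern_eq_eval, c]
    push_cast
    rfl
  have hslope : ∀ j : ℕ, slope g ((j : ℝ) / (n + 1)) (((j : ℝ) + 1) / (n + 1))
      = ((n : ℝ) + 1) • (c (j + 1) - c j) := by
    intro j
    rw [slope_def_module]
    simp only [c]
    push_cast
    congr 1
    field_simp
    ring
  -- summation by parts against `bernsteinPolynomial.derivative_succ`
  have hlast : B (n + 1) = 0 := by simp [B, bernsteinPolynomial.eq_zero_of_lt ℝ n.lt_succ_self]
  have hshift := sum_range_succ' (fun j => B j • c j) (n + 1)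
  rw [sum_range_succ, hlast, zero_smul, add_zero] at hshift
  rw [hfun]
  convert HasDerivAt.fun_sum fun j _ =>
    ((bernsteinPolynomial ℝ (n + 1) j).hasDerivAt t).smul_const (c j) using 1
  calc ∑ j ∈ range (n + 1), bern n j t • slope g ((j : ℝ) / (n + 1)) (((j : ℝ) + 1) / (n + 1))
      = ((n : ℝ) + 1) • (∑ j ∈ range (n + 1), B j • c (j + 1)
          - ∑ j ∈ range (n + 1), B j • c j) := by
        simp only [hslope, bern_eq_eval, smul_sum, ← sum_sub_distrib]
        exact sum_congr rfl fun j _ => by module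
    _ = ∑ j ∈ range (n + 1), (((n : ℝ) + 1) * (B j - B (j + 1))) • c (j + 1)
          + (-((n : ℝ) + 1) * B 0) • c 0 := by
        simp only [hshift, mul_sub, sub_smul, sum_sub_distrib, mul_smul, ← smul_sum]
        module
    _ = _ := by
        rw [sum_range_succ' _ (n + 1)]
        simp only [bernsteinPolynomial.derivative_succ, bernsteinPolynomial.derivative_zero,
          eval_mul, eval_sub, eval_neg, eval_natCast]
        push_cast
        rfl

lemma norm_slope_sub_le {x x' : ℝ → E} {s : Set ℝ} (hs : Convex ℝ s)
    (hx : ∀ r ∈ s, HasDerivWithinAt x (x' r) s r) {v : E} {C : ℝ}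
    (hC : ∀ r ∈ s, ‖x' r - v‖ ≤ C) {a b : ℝ} (ha : a ∈ s) (hb : b ∈ s) (hab : a ≠ b) :
    ‖slope x a b - v‖ ≤ C := by
  have hF : ∀ r ∈ s, HasDerivWithinAt (fun r => x r - r • v) (x' r - v) s r := fun r hr =>
    (hx r hr).sub (by simpa using ((hasDerivAt_id r).smul_const v).hasDerivWithinAt)
  have hmvt := hs.norm_image_sub_le_of_norm_hasDerivWithin_le hF hC ha hb
  have hba : b - a ≠ 0 := sub_ne_zero.2 hab.symm
  have hslope : slope x a b - v = (b - a)⁻¹ • ((x b - b • v) - (x a - a • v)) := by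
    rw [show (x b - b • v) - (x a - a • v) = (x b - x a) - (b - a) • v by module, smul_sub,
      smul_smul, inv_mul_cancel₀ hba, one_smul, slope_def_module]
  rw [hslope, norm_smul, norm_inv, inv_mul_le_iff₀ (norm_pos_iff.2 hba), mul_comm]
  exact hmvt

lemma norm_deriv_bapprox_sub_le {x x' : ℝ → E}
    (hx : ∀ r ∈ Icc (0:ℝ) 1, HasDerivWithinAt x (x' r) (Icc 0 1) r)
    (hx' : ContinuousOn x' (Icc 0 1)) {N : ℕ} (hN : 1 ≤ N) {δ : ℝ} (hδ : 0 < δ)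
    {t : ℝ} (ht : t ∈ Icc (0:ℝ) 1) :
    ‖deriv (bapprox N x) t - x' t‖ ≤ (1 + 1 / (N * δ ^ 2)) * modCont x' δ := by
  obtain ⟨n, rfl⟩ := Nat.exists_eq_add_of_le' hN
  have hn : (0:ℝ) < n + 1 := by positivity
  rw [(hasDerivAt_bapprox_succ n x t).deriv]
  refine norm_sum_smul_sub_le (fun j _ => bern_nonneg n j ht) (sum_bern n t)
    (e := fun j : ℕ => (((j : ℝ) / (n + 1) - t) ^ 2 + (((j : ℝ) + 1) / (n + 1) - t) ^ 2) / δ ^ 2)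
    (fun j hj => ?_) (modCont_nonneg hx' hδ.le) ?_
  · set a := (j : ℝ) / (n + 1)
    set b := ((j : ℝ) + 1) / (n + 1)
    have hab : a < b := div_lt_div_of_pos_right (by linarith) hn
    have hsub : Icc a b ⊆ Icc 0 1 := Icc_subset_Icc (by positivity)
      ((div_le_one hn).2 (by exact_mod_cast Nat.succ_le_succ (mem_range_succ_iff.1 hj)))
    refine norm_slope_sub_le (convex_Icc a b) (fun r hr => (hx r (hsub hr)).mono hsub)
      (fun r hr => ?_) (left_mem_Icc.2 hab.le) (right_mem_Icc.2 hab.le) hab.ne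
    refine (norm_sub_le_one_add_sq_div_sq_mul_modCont hx' hδ (hsub hr) ht).trans ?_
    have hr_sq : (r - t) ^ 2 ≤ (a - t) ^ 2 + (b - t) ^ 2 := by
      rcases le_total t r with htr | hrt
      · nlinarith [hr.2]
      · nlinarith [hr.1]
    gcongr
    exact modCont_nonneg hx' hδ.le
  · simp only [mul_div_assoc', ← sum_div, ← div_div]
    gcongr
    exact_mod_cast sum_bern_mul_sq_add_sq_le n ht

end Derivative

/-- Theorem 1, Feasibility: the Bernstein approximations of a feasible
pair `(x,u)` satisfy the relaxed dynamics and inequality constraints at all nodes,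
with relaxation bound `δ_P^N = C_P · max{W_{x'}(N^{-1/2}), W_x(N^{-1/2}), W_u(N^{-1/2})}`,
and match the boundary values of `x`. -/
theorem bernstein_discretization_feasibility (nx nu nh : ℕ)
    (f : EuclideanSpace ℝ (Fin nx) × EuclideanSpace ℝ (Fin nu) → EuclideanSpace ℝ (Fin nx))
    (h : EuclideanSpace ℝ (Fin nx) × EuclideanSpace ℝ (Fin nu) → EuclideanSpace ℝ (Fin nh))
    (Lf Lh : NNReal) (hf : LipschitzWith Lf f) (hh : LipschitzWith Lh h)
    (x x' : ℝ → EuclideanSpace ℝ (Fin nx)) (u : ℝ → EuclideanSpace ℝ (Fin nu))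
    (hxd : ∀ t ∈ Set.Icc (0:ℝ) 1, HasDerivWithinAt x (x' t) (Set.Icc (0:ℝ) 1) t)
    (hx' : ContinuousOn x' (Set.Icc (0:ℝ) 1))
    (hu : ContinuousOn u (Set.Icc (0:ℝ) 1))
    (hdyn : ∀ t ∈ Set.Icc (0:ℝ) 1, x' t = f (x t, u t))
    (hineq : ∀ t ∈ Set.Icc (0:ℝ) 1, ∀ i, h (x t, u t) i ≤ 0) :
    ∃ CP : ℝ, 0 < CP ∧ ∀ N : ℕ, 1 ≤ N → ∀ j : ℕ, j ≤ N →
      ‖deriv (bapprox N x) ((j : ℝ) / (N : ℝ))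
          - f (bapprox N x ((j : ℝ) / (N : ℝ)), bapprox N u ((j : ℝ) / (N : ℝ)))‖
        ≤ CP * max (modCont x' ((N : ℝ) ^ (-(1/2 : ℝ))))
            (max (modCont x ((N : ℝ) ^ (-(1/2 : ℝ)))) (modCont u ((N : ℝ) ^ (-(1/2 : ℝ))))) ∧
      (∀ i, h (bapprox N x ((j : ℝ) / (N : ℝ)), bapprox N u ((j : ℝ) / (N : ℝ))) i
        ≤ CP * max (modCont x' ((N : ℝ) ^ (-(1/2 : ℝ))))
            (max (modCont x ((N : ℝ) ^ (-(1/2 : ℝ)))) (modCont u ((N : ℝ) ^ (-(1/2 : ℝ)))))) ∧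
      bapprox N x 0 = x 0 ∧ bapprox N x 1 = x 1 := by
  have hx : ContinuousOn x (Icc 0 1) := fun t ht => (hxd t ht).continuousWithinAt
  refine ⟨2 * (1 + Lf + Lh), by positivity, fun N hN j hj => ?_⟩
  set δ : ℝ := (N : ℝ) ^ (-(1/2 : ℝ))
  set M := max (modCont x' δ) (max (modCont x δ) (modCont u δ))
  set t : ℝ := (j : ℝ) / N
  have hN0 : (0:ℝ) < N := by exact_mod_cast hN
  have hδ : 0 < δ := by positivity
  have hNδ : 1 + 1 / (N * δ ^ 2) = 2 := by
    rw [← Real.rpow_natCast, ← Real.rpow_mul hN0.le]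
    norm_num [Real.rpow_neg_one, hN0.ne']
  have ht : t ∈ Icc (0:ℝ) 1 := ⟨by positivity, (div_le_one hN0).2 (by exact_mod_cast hj)⟩
  have hM : 0 ≤ M := (modCont_nonneg hx' hδ.le).trans (le_max_left _ _)
  have hder : ‖deriv (bapprox N x) t - x' t‖ ≤ 2 * M := by
    grw [norm_deriv_bapprox_sub_le hxd hx' hN hδ ht, hNδ, le_max_left (modCont x' δ)]
  have hstate : dist (x t, u t) (bapprox N x t, bapprox N u t) ≤ 2 * M := by
    grw [dist_bapprox_prod_le hx hu hN hδ ht, hNδ]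
    gcongr
    exact le_max_right _ _
  refine ⟨?_, fun i => ?_, bapprox_zero N x, bapprox_one hN x⟩
  · calc ‖deriv (bapprox N x) t - f (bapprox N x t, bapprox N u t)‖
        ≤ ‖deriv (bapprox N x) t - x' t‖
          + dist (f (x t, u t)) (f (bapprox N x t, bapprox N u t)) := by
          rw [dist_eq_norm, ← hdyn t ht]
          exact norm_sub_le_norm_sub_add_norm_sub _ _ _
      _ ≤ 2 * M + Lf * (2 * M) := by grw [hder, hf.dist_le_mul, hstate]
      _ ≤ 2 * (1 + Lf + Lh) * M := by nlinarith [Lh.coe_nonneg]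
  · calc h (bapprox N x t, bapprox N u t) i
        ≤ h (x t, u t) i + dist (h (x t, u t)) (h (bapprox N x t, bapprox N u t)) := by
          rw [← sub_le_iff_le_add', dist_comm, dist_eq_norm]
          exact (le_abs_self _).trans (PiLp.norm_apply_le (h _ - h _) i)
      _ ≤ 0 + Lh * (2 * M) := by grw [hineq t ht i, hh.dist_le_mul, hstate]
      _ ≤ 2 * (1 + Lf + Lh) * M := by nlinarith [Lf.coe_nonneg]
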